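/- arXiv:2303.12412 — 3 statements merged into one kernel-verified Lean document; each statement's English description precedes it below -/
import Mathlib

section
/- Let f be a polynomial in ℂ[x_{ij} : 1 ≤ i, j ≤ n]. For 1 ≤ i, j ≤ n let D_{ij} be the unique ℂ-derivation of ℂ[x_{ij}] with D_{ij}(x_{hk}) = δ_{jh} x_{ik} for all h, k. Then the operator column determinant Σ_{σ ∈ S_n} sgn(σ) (D_{σ(1),1} + δ_{σ(1),1}(n−1)·id) ∘ (D_{σ(2),2} + δ_{σ(2),2}(n−2)·id) ∘ ⋯ ∘ (D_{σ(n),n} + δ_{σ(n),n}·0·id) applied to f equals det([x_{ij}]_{i,j=1,…,n}) · Ω_n(f), where Ω_n = Σ_{σ ∈ S_n} sgn(σ) ∂/∂x_{σ(1),1} ∘ ⋯ ∘ ∂/∂x_{σ(n),n} is the Cayley Ω-process (the classical Capelli identity in the case n = d). -/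
noncomputable section

open MvPolynomial

/-- The derivation `D_{ij}` of `ℂ[x_{hk}]` with `D_{ij}(x_{hk}) = δ_{jh} x_{ik}`
(the polarization operator of the `j`-th row to the `i`-th row). -/
def Dpol (n d : ℕ) (i j : Fin n) :
    Derivation ℂ (MvPolynomial (Fin n × Fin d) ℂ) (MvPolynomial (Fin n × Fin d) ℂ) :=
  MvPolynomial.mkDerivation ℂ (fun p : Fin n × Fin d =>
    if p.1 = j then MvPolynomial.X (i, p.2) else 0)

/-- The Cayley Ω-process `Ω_n = Σ_σ sgn(σ) ∂/∂x_{σ(1),1} ∘ ⋯ ∘ ∂/∂x_{σ(n),n}`. -/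
def cayleyOmega (n : ℕ) : Module.End ℂ (MvPolynomial (Fin n × Fin n) ℂ) :=
  ∑ σ : Equiv.Perm (Fin n), (Equiv.Perm.sign σ : ℤ) •
    (List.ofFn fun j : Fin n =>
      ((MvPolynomial.pderiv (σ j, j)).toLinearMap :
        Module.End ℂ (MvPolynomial (Fin n × Fin n) ℂ))).prod

namespace CapelliAux

set_option linter.unusedSectionVars false

open scoped TensorProduct

variable {A : Type*} [Ring A] [Algebra ℂ A] {n : ℕ}

/-- Grassmann algebra on `n` generators. -/
abbrev Lam (n : ℕ) : Type := ExteriorAlgebra ℂ (Fin n → ℂ)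

/-- `A` tensored with the Grassmann algebra. -/
abbrev TT (n : ℕ) (A : Type*) [Ring A] [Algebra ℂ A] : Type _ := A ⊗[ℂ] Lam n

/-- inclusion of `A` -/
def ja : A →ₐ[ℂ] TT n A := Algebra.TensorProduct.includeLeft

/-- the `i`-th Grassmann generator inside `TT`. -/
def ψ (i : Fin n) : TT n A := 1 ⊗ₜ ExteriorAlgebra.ι ℂ (Pi.single i 1)

lemma ja_comm_ψ (x : A) (i : Fin n) : (ja x : TT n A) * ψ i = ψ i * ja x := by
  simp [ja, ψ, Algebra.TensorProduct.includeLeft_apply,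
    Algebra.TensorProduct.tmul_mul_tmul]

lemma ψ_anti (i j : Fin n) : (ψ i : TT n A) * ψ j = - (ψ j * ψ i) := by
  have h : ExteriorAlgebra.ι ℂ (Pi.single i 1 : Fin n → ℂ) * ExteriorAlgebra.ι ℂ (Pi.single j 1)
      = - (ExteriorAlgebra.ι ℂ (Pi.single j 1 : Fin n → ℂ) * ExteriorAlgebra.ι ℂ (Pi.single i 1)) :=
    eq_neg_of_add_eq_zero_left (ExteriorAlgebra.ι_add_mul_swap _ _)
  simp only [ψ, Algebra.TensorProduct.tmul_mul_tmul, one_mul, h, TensorProduct.tmul_neg]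


variable (a b : Fin n → Fin n → A)

/-- generic Grassmann "column" element. -/
def colv (c : Fin n → A) : TT n A := ∑ i, ψ i * ja (c i)

/-- `α_k = Σ_i ψ_i a_{ik}`. -/
def αv (k : Fin n) : TT n A := colv (fun i => a i k)

/-- `γ_j = Σ_k α_k b_{jk}`. -/
def γv (j : Fin n) : TT n A := ∑ k, αv a k * ja (b j k)

/-- product of `α`'s along a list. -/
def Pl (l : List (Fin n)) : TT n A := (l.map (αv a)).prod

lemma ψ_comm_colv (c : Fin n → A) (j : Fin n) :
    ψ j * colv c = -(colv c * ψ j) := by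
  rw [colv, Finset.mul_sum, Finset.sum_mul, ← Finset.sum_neg_distrib]
  refine Finset.sum_congr rfl fun i _ => ?_
  rw [← mul_assoc, ψ_anti j i, neg_mul, mul_assoc, ← ja_comm_ψ, ← mul_assoc]

lemma ψ_comm_αv (k j : Fin n) : ψ j * αv a k = -(αv a k * ψ j) := ψ_comm_colv _ _

lemma colv_mul_colv (hA : ∀ i k i' k', a i k * a i' k' = a i' k' * a i k)
    (k x : Fin n) : αv a k * αv a x = -(αv a x * αv a k) := by
  simp only [αv, colv, Finset.mul_sum, Finset.sum_mul, ← Finset.sum_neg_distrib]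
  rw [Finset.sum_comm]
  refine Finset.sum_congr rfl fun i _ => Finset.sum_congr rfl fun i' _ => ?_
  -- goal : (ψ i' * ja (a i' k)) * (ψ i * ja (a i x)) = -((ψ i * ja (a i x)) * (ψ i' * ja (a i' k)))
  calc (ψ i * ja (a i k)) * (ψ i' * ja (a i' x))
      = ψ i * ψ i' * (ja (a i k) * ja (a i' x)) := by
        rw [mul_assoc, ← mul_assoc (ja (a i k)), ja_comm_ψ, mul_assoc, ← mul_assoc]
    _ = -(ψ i' * ψ i) * (ja (a i' x) * ja (a i k)) := by
        rw [ψ_anti, ← map_mul, ← map_mul, hA]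
    _ = -((ψ i' * ja (a i' x)) * (ψ i * ja (a i k))) := by
        rw [neg_mul, mul_assoc, ← mul_assoc (ψ i), ← ja_comm_ψ, mul_assoc, ← mul_assoc]


lemma bmove (hAB : ∀ j k i l, b j k * a i l = a i l * b j k + (if i = j ∧ l = k then 1 else 0))
    (j k x : Fin n) :
    (ja (b j k) : TT n A) * αv a x = αv a x * ja (b j k) + (if x = k then ψ j else 0) := by
  simp only [αv, colv, Finset.mul_sum, Finset.sum_mul]
  have key : ∀ i : Fin n, (ja (b j k) : TT n A) * (ψ i * ja (a i x))
      = ψ i * ja (a i x) * ja (b j k) + (if i = j ∧ x = k then ψ i else 0) := by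
    intro i
    calc (ja (b j k) : TT n A) * (ψ i * ja (a i x))
        = ψ i * (ja (b j k) * ja (a i x)) := by rw [← mul_assoc, ja_comm_ψ, mul_assoc]
      _ = ψ i * ja (a i x * b j k) + ψ i * ja (if i = j ∧ x = k then 1 else 0) := by
          rw [← map_mul, hAB j k i x, map_add, mul_add]
      _ = ψ i * ja (a i x) * ja (b j k) + (if i = j ∧ x = k then ψ i else 0) := by
          rw [map_mul, ← mul_assoc]
          congr 1
          by_cases h : i = j ∧ x = k <;> simp [h]
  rw [Finset.sum_congr rfl fun i _ => key i, Finset.sum_add_distrib]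
  congr 1
  by_cases hx : x = k
  · simp [hx]
  · simp [hx]

lemma αv_swap (hA : ∀ i k i' k', a i k * a i' k' = a i' k' * a i k)
    (k x : Fin n) (W : TT n A) :
    αv a k * (αv a x * W) = -(αv a x * (αv a k * W)) := by
  rw [← mul_assoc, colv_mul_colv a hA, neg_mul, mul_assoc]

lemma ψ_swap (j x : Fin n) (W : TT n A) :
    ψ j * (αv a x * W) = -(αv a x * (ψ j * W)) := by
  rw [← mul_assoc, ψ_comm_αv, neg_mul, mul_assoc]

lemma bmove' (hAB : ∀ j k i l, b j k * a i l = a i l * b j k + (if i = j ∧ l = k then 1 else 0))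
    (j k x : Fin n) (W : TT n A) :
    ja (b j k) * (αv a x * W) = αv a x * (ja (b j k) * W) + (if x = k then ψ j * W else 0) := by
  rw [← mul_assoc, bmove a b hAB, add_mul, mul_assoc, ite_mul, zero_mul]

lemma step (hA : ∀ i k i' k', a i k * a i' k' = a i' k' * a i k)
    (hAB : ∀ j k i l, b j k * a i l = a i l * b j k + (if i = j ∧ l = k then 1 else 0))
    (j : Fin n) (l : List (Fin n)) :
    γv a b j * Pl a l + (l.length : ℂ) • (ψ j * Pl a l)
      = ∑ k, αv a k * (Pl a l * ja (b j k)) := by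
  induction l with
  | nil => simp [Pl, γv]
  | cons x l ih =>
    have hPl : Pl a (x :: l) = αv a x * Pl a l := by simp [Pl]
    set Z := Pl a l with hZ
    rw [hPl]
    have e1 : γv a b j * (αv a x * Z)
        = ∑ k, αv a k * (ja (b j k) * (αv a x * Z)) := by
      rw [γv, Finset.sum_mul]; simp only [mul_assoc]
    have e2 : ∀ k : Fin n, (ja (b j k) : TT n A) * (αv a x * Z)
        = αv a x * (ja (b j k) * Z) + (if x = k then ψ j * Z else 0) :=
      fun k => bmove' a b hAB j k x Z
    have e3 : (∑ k, αv a k * (if x = k then ψ j * Z else 0))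
        = αv a x * (ψ j * Z) := by
      simp [mul_ite, mul_zero, Finset.sum_ite_eq]
    have e4 : (∑ k, αv a k * (αv a x * (ja (b j k) * Z)))
        = -(αv a x * (γv a b j * Z)) := by
      have : ∀ k : Fin n, αv a k * (αv a x * (ja (b j k) * Z))
          = -(αv a x * (αv a k * (ja (b j k) * Z))) :=
        fun k => αv_swap a hA k x _
      rw [Finset.sum_congr rfl fun k _ => this k, Finset.sum_neg_distrib, neg_inj,
        ← Finset.mul_sum, γv, Finset.sum_mul]
      simp only [mul_assoc]
    have ihe : γv a b j * Z
        = (∑ k, αv a k * (Z * ja (b j k))) - (l.length : ℂ) • (ψ j * Z) :=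
      eq_sub_of_add_eq ih
    have e5 : ∀ k : Fin n, αv a k * ((αv a x * Z) * ja (b j k))
        = -(αv a x * (αv a k * (Z * ja (b j k)))) := by
      intro k
      rw [mul_assoc, αv_swap a hA k x _]
    calc γv a b j * (αv a x * Z) + ((x :: l).length : ℂ) • (ψ j * (αv a x * Z))
        = (∑ k, αv a k * (ja (b j k) * (αv a x * Z)))
            + ((l.length + 1 : ℕ) : ℂ) • (ψ j * (αv a x * Z)) := by
          rw [e1]; norm_num
      _ = (∑ k, αv a k * (αv a x * (ja (b j k) * Z))) + αv a x * (ψ j * Z)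
            + ((l.length + 1 : ℕ) : ℂ) • (ψ j * (αv a x * Z)) := by
          simp only [e2, mul_add, Finset.sum_add_distrib, e3]
      _ = -(αv a x * (γv a b j * Z)) + αv a x * (ψ j * Z)
            - ((l.length : ℂ) + 1) • (αv a x * (ψ j * Z)) := by
          rw [e4, ψ_swap, smul_neg]; push_cast; ring_nf
          abel
      _ = -(αv a x * ((∑ k, αv a k * (Z * ja (b j k))) - (l.length : ℂ) • (ψ j * Z)))
            + αv a x * (ψ j * Z) - ((l.length : ℂ) + 1) • (αv a x * (ψ j * Z)) := by
          rw [← ihe]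
      _ = -(αv a x * (∑ k, αv a k * (Z * ja (b j k)))) := by
          rw [mul_sub, mul_smul_comm, add_smul, one_smul]
          abel
      _ = ∑ k, αv a k * ((αv a x * Z) * ja (b j k)) := by
          rw [Finset.mul_sum, ← Finset.sum_neg_distrib]
          exact Finset.sum_congr rfl fun k _ => (e5 k).symm


/-- iterated Grassmann column product with decreasing constants. -/
def G : (m : ℕ) → (Fin m → Fin n) → TT n A
  | 0, _ => 1
  | (m+1), cols => (γv a b (cols 0) + (m : ℂ) • ψ (cols 0)) * G m (fun t => cols t.succ)

lemma G_eq (hA : ∀ i k i' k', a i k * a i' k' = a i' k' * a i k)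
    (hAB : ∀ j k i l, b j k * a i l = a i l * b j k + (if i = j ∧ l = k then 1 else 0)) :
    ∀ (m : ℕ) (cols : Fin m → Fin n),
    G a b m cols = ∑ g : Fin m → Fin n,
      Pl a (List.ofFn g) * ja ((List.ofFn fun t => b (cols t) (g t)).prod)
  | 0, cols => by
    simp [G, Pl]
  | (m+1), cols => by
    rw [show G a b (m+1) cols
        = (γv a b (cols 0) + (m : ℂ) • ψ (cols 0)) * G a b m (fun t => cols t.succ) from rfl,
      G_eq hA hAB m (fun t => cols t.succ), Finset.mul_sum]
    have key : ∀ g : Fin m → Fin n,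
        (γv a b (cols 0) + (m : ℂ) • ψ (cols 0)) *
          (Pl a (List.ofFn g) * ja ((List.ofFn fun t => b (cols t.succ) (g t)).prod))
        = ∑ k, αv a k * (Pl a (List.ofFn g) *
            ja (b (cols 0) k * (List.ofFn fun t => b (cols t.succ) (g t)).prod)) := by
      intro g
      rw [← mul_assoc, add_mul, smul_mul_assoc]
      have hst := step a b hA hAB (cols 0) (List.ofFn g)
      rw [List.length_ofFn] at hst
      rw [hst, Finset.sum_mul]
      refine Finset.sum_congr rfl fun k _ => ?_
      rw [mul_assoc, mul_assoc, ← map_mul]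
    rw [Finset.sum_congr rfl fun g _ => key g]
    rw [← Equiv.sum_comp (Fin.consEquiv (fun _ : Fin (m+1) => Fin n))
      (fun g' : Fin (m+1) → Fin n => Pl a (List.ofFn g')
        * ja ((List.ofFn fun t => b (cols t) (g' t)).prod)),
      Fintype.sum_prod_type, Finset.sum_comm]
    refine Finset.sum_congr rfl fun k _ => Finset.sum_congr rfl fun g _ => ?_
    have h1 : List.ofFn (Fin.cons k g : Fin (m+1) → Fin n) = k :: List.ofFn g := by
      rw [List.ofFn_succ]
      simp
    have h2 : (List.ofFn fun t : Fin (m+1) => b (cols t) ((Fin.cons k g : Fin (m+1) → Fin n) t))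
        = b (cols 0) k :: List.ofFn fun t : Fin m => b (cols t.succ) (g t) := by
      rw [List.ofFn_succ]
      simp
    have h3 : (Fin.consEquiv (fun _ : Fin (m+1) => Fin n)) (k, g) = Fin.cons k g := rfl
    rw [h3, h1, h2]
    have h4 : Pl a (k :: List.ofFn g) = αv a k * Pl a (List.ofFn g) := by simp [Pl]
    rw [h4, List.prod_cons, mul_assoc]


lemma ja_comm_ψlist (x : A) : ∀ (l : List (Fin n)),
    (ja x : TT n A) * (l.map ψ).prod = (l.map ψ).prod * ja x
  | [] => by simp
  | (i :: l) => by
    rw [List.map_cons, List.prod_cons, ← mul_assoc, ja_comm_ψ, mul_assoc,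
      ja_comm_ψlist x l, ← mul_assoc]

lemma ja_comm_Ψ {m : ℕ} (x : A) (h : Fin m → Fin n) :
    (ja x : TT n A) * (List.ofFn fun t => (ψ (h t) : TT n A)).prod
      = (List.ofFn fun t => (ψ (h t) : TT n A)).prod * ja x := by
  have := ja_comm_ψlist (n := n) x (List.ofFn h)
  rwa [List.map_ofFn] at this

/-- the column entries of the Capelli determinant. -/
def Mcolv (j : Fin n) : Fin n → A := fun i =>
  (∑ k, a i k * b j k) + (if i = j then ((n : ℂ) - 1 - (j : ℕ)) • 1 else 0)

lemma colv_Mcolv (j : Fin n) :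
    colv (Mcolv a b j) = γv a b j + ((n : ℂ) - 1 - (j : ℕ)) • ψ j := by
  simp only [Mcolv, colv, map_add, mul_add, Finset.sum_add_distrib]
  congr 1
  · rw [γv]
    have : ∀ i : Fin n, ψ i * ja (∑ k, a i k * b j k)
        = ∑ k, (ψ i * ja (a i k)) * ja (b j k) := by
      intro i
      rw [map_sum, Finset.mul_sum]
      exact Finset.sum_congr rfl fun k _ => by rw [map_mul, mul_assoc]
    rw [Finset.sum_congr rfl fun i _ => this i, Finset.sum_comm]
    refine Finset.sum_congr rfl fun k _ => ?_
    rw [αv, colv, Finset.sum_mul]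
  · have : ∀ i : Fin n, (ψ i : TT n A) * ja (if i = j then ((n : ℂ) - 1 - (j : ℕ)) • 1 else 0)
        = if i = j then ((n : ℂ) - 1 - (j : ℕ)) • ψ i else 0 := by
      intro i
      by_cases h : i = j
      · simp [h, mul_smul_comm]
      · simp [h]
    rw [Finset.sum_congr rfl fun i _ => this i, Finset.sum_ite_eq']
    simp

/-- `G` as the actual column-determinant generator product. -/
lemma G_eq_prod : ∀ (m : ℕ) (cols : Fin m → Fin n),
    G a b m cols
      = (List.ofFn fun t : Fin m =>
          γv a b (cols t) + ((m - 1 - (t : ℕ) : ℕ) : ℂ) • ψ (cols t)).prod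
  | 0, cols => by simp [G]
  | (m+1), cols => by
    rw [List.ofFn_succ, List.prod_cons,
      show G a b (m+1) cols
        = (γv a b (cols 0) + (m : ℂ) • ψ (cols 0)) * G a b m (fun t => cols t.succ) from rfl,
      G_eq_prod m (fun t => cols t.succ)]
    congr 1
    refine congrArg List.prod (congrArg List.ofFn (funext fun t => ?_))
    have h5 : m - 1 - (t : ℕ) = m + 1 - 1 - (t.succ : ℕ) := by
      simp only [Fin.val_succ]
      omega
    rw [h5]

/-- expanding a product of generic Grassmann columns. -/
lemma expand : ∀ (m : ℕ) (w : Fin m → Fin n → A),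
    (List.ofFn fun t => colv (w t)).prod
      = ∑ h : Fin m → Fin n,
          (List.ofFn fun t => (ψ (h t) : TT n A)).prod
            * ja ((List.ofFn fun t => w t (h t)).prod)
  | 0, w => by simp
  | (m+1), w => by
    rw [List.ofFn_succ, List.prod_cons, expand m (fun t => w t.succ)]
    have hcol : colv (w 0) = ∑ i, ψ i * ja (w 0 i) := rfl
    rw [hcol, Finset.sum_mul]
    have key : ∀ (i : Fin n) (h : Fin m → Fin n),
        (ψ i * ja (w 0 i)) * ((List.ofFn fun t => (ψ (h t) : TT n A)).prod
            * ja ((List.ofFn fun t => w t.succ (h t)).prod))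
        = (ψ i * (List.ofFn fun t => (ψ (h t) : TT n A)).prod)
            * ja (w 0 i * (List.ofFn fun t => w t.succ (h t)).prod) := by
      intro i h
      rw [mul_assoc, ← mul_assoc (ja (w 0 i)), ja_comm_Ψ, mul_assoc, ← map_mul, ← mul_assoc]
    rw [Finset.sum_congr rfl fun i _ => (by rw [Finset.mul_sum] :
      (ψ i * ja (w 0 i)) * (∑ h : Fin m → Fin n,
          (List.ofFn fun t => (ψ (h t) : TT n A)).prod
            * ja ((List.ofFn fun t => w t.succ (h t)).prod))
        = ∑ h : Fin m → Fin n, (ψ i * ja (w 0 i)) *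
            ((List.ofFn fun t => (ψ (h t) : TT n A)).prod
              * ja ((List.ofFn fun t => w t.succ (h t)).prod)))]
    rw [Finset.sum_congr rfl fun i _ => Finset.sum_congr rfl fun h _ => key i h]
    rw [← Equiv.sum_comp (Fin.consEquiv (fun _ : Fin (m+1) => Fin n))
      (fun h' : Fin (m+1) → Fin n => (List.ofFn fun t => (ψ (h' t) : TT n A)).prod
        * ja ((List.ofFn fun t => w t (h' t)).prod)),
      Fintype.sum_prod_type]
    refine Finset.sum_congr rfl fun i _ => Finset.sum_congr rfl fun h _ => ?_
    have h3 : (Fin.consEquiv (fun _ : Fin (m+1) => Fin n)) (i, h) = Fin.cons i h := rfl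
    have h1 : (List.ofFn fun t : Fin (m+1) => (ψ ((Fin.cons i h : Fin (m+1) → Fin n) t) : TT n A))
        = ψ i :: List.ofFn fun t : Fin m => (ψ (h t) : TT n A) := by
      rw [List.ofFn_succ]; simp
    have h2 : (List.ofFn fun t : Fin (m+1) => w t ((Fin.cons i h : Fin (m+1) → Fin n) t))
        = w 0 i :: List.ofFn fun t : Fin m => w t.succ (h t) := by
      rw [List.ofFn_succ]; simp
    rw [h3, h1, h2, List.prod_cons, List.prod_cons]


/-- the family of alternating forms: `det` in top degree, `0` elsewhere. -/
def fam (n : ℕ) : ∀ i : ℕ, ((Fin n → ℂ) [⋀^Fin i]→ₗ[ℂ] ℂ) := fun i =>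
  if h : i = n then h.symm ▸ (Matrix.detRowAlternating : (Fin n → ℂ) [⋀^Fin n]→ₗ[ℂ] ℂ) else 0

/-- coefficient of the top Grassmann form. -/
def φfun (n : ℕ) : Lam n →ₗ[ℂ] ℂ := ExteriorAlgebra.liftAlternating (fam n)

/-- extraction of the coefficient of the top form. -/
def Φ : TT n A →ₗ[ℂ] A :=
  (TensorProduct.rid ℂ A).toLinearMap.comp (LinearMap.lTensor A (φfun n))

lemma Φ_tmul (c : A) (v : Lam n) : Φ (c ⊗ₜ[ℂ] v) = φfun n v • c := by
  simp [Φ, TensorProduct.rid_tmul]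

lemma φ_top (v : Fin n → (Fin n → ℂ)) :
    φfun n (ExteriorAlgebra.ιMulti ℂ n v) = Matrix.detRowAlternating v := by
  rw [φfun, ExteriorAlgebra.liftAlternating_apply_ιMulti]
  simp [fam]

lemma tmul_list : ∀ l : List (Lam n),
    (l.map fun u => ((1 : A) ⊗ₜ[ℂ] u : TT n A)).prod = (1 : A) ⊗ₜ[ℂ] l.prod
  | [] => by simp [Algebra.TensorProduct.one_def]
  | (u :: l) => by
    rw [List.map_cons, List.prod_cons, List.prod_cons, tmul_list l,
      Algebra.TensorProduct.tmul_mul_tmul, one_mul]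

lemma Φ_Ψ_ja (h : Fin n → Fin n) (c : A) :
    Φ ((List.ofFn fun t => (ψ (h t) : TT n A)).prod * ja c)
      = Matrix.detRowAlternating (fun t => (Pi.single (h t) 1 : Fin n → ℂ)) • c := by
  have h1 : (List.ofFn fun t => (ψ (h t) : TT n A)).prod
      = (1 : A) ⊗ₜ[ℂ]
        (List.ofFn fun t => ExteriorAlgebra.ι ℂ (Pi.single (h t) 1 : Fin n → ℂ)).prod := by
    have h2 := tmul_list (A := A)
      (List.ofFn fun t => ExteriorAlgebra.ι ℂ (Pi.single (h t) 1 : Fin n → ℂ))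
    rw [List.map_ofFn] at h2
    exact h2 ▸ rfl
  rw [h1, show (ja c : TT n A) = c ⊗ₜ[ℂ] 1 from rfl,
    Algebra.TensorProduct.tmul_mul_tmul, one_mul, mul_one, Φ_tmul,
    ← ExteriorAlgebra.ιMulti_apply, φ_top]

lemma eps_zero {h : Fin n → Fin n} (hni : ¬ Function.Injective h) :
    Matrix.detRowAlternating (fun t => (Pi.single (h t) 1 : Fin n → ℂ)) = 0 := by
  obtain ⟨t, t', hval, hne⟩ := Function.not_injective_iff.mp hni
  exact AlternatingMap.map_eq_zero_of_eq _ _ (by rw [hval]) hne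

lemma eps_perm (σ : Equiv.Perm (Fin n)) :
    Matrix.detRowAlternating (fun t => (Pi.single (σ t) 1 : Fin n → ℂ))
      = ((Equiv.Perm.sign σ : ℤ) : ℂ) := by
  have h1 : (fun t => (Pi.single (σ t) 1 : Fin n → ℂ)) = σ.permMatrix ℂ := by
    funext t j
    simp [Equiv.Perm.permMatrix, PEquiv.toMatrix, Equiv.toPEquiv, Pi.single_apply, eq_comm]
  rw [h1, show Matrix.detRowAlternating (σ.permMatrix ℂ) = (σ.permMatrix ℂ).det from rfl,
    Matrix.det_permutation]

lemma funsum {M : Type*} [AddCommMonoid M] (F : (Fin n → Fin n) → M)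
    (h0 : ∀ g, ¬ Function.Injective g → F g = 0) :
    ∑ g : Fin n → Fin n, F g = ∑ σ : Equiv.Perm (Fin n), F ⇑σ := by
  classical
  rw [show (∑ g : Fin n → Fin n, F g)
      = ∑ g ∈ Finset.univ.filter (fun g : Fin n → Fin n => Function.Injective g), F g from
    (Finset.sum_filter_of_ne (fun g _ hne => by
      by_contra hni
      exact hne (h0 g hni))).symm]
  refine (Finset.sum_bij (fun (σ : Equiv.Perm (Fin n)) _ => ⇑σ) ?_ ?_ ?_ ?_).symm
  · intro σ _
    simp [Finset.mem_filter, Equiv.injective]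
  · intro σ₁ _ σ₂ _ hcoe
    exact Equiv.coe_fn_injective hcoe
  · intro g hg
    rw [Finset.mem_filter] at hg
    exact ⟨Equiv.ofBijective g (Finite.injective_iff_bijective.mp hg.2), Finset.mem_univ _, rfl⟩
  · intro σ _
    rfl

lemma breindex (hB : ∀ j k j' k', Commute (b j k) (b j' k')) :
    ∑ ρ : Equiv.Perm (Fin n), (Equiv.Perm.sign ρ : ℤ) • (List.ofFn fun t => b t (ρ t)).prod
      = ∑ σ : Equiv.Perm (Fin n), (Equiv.Perm.sign σ : ℤ) • (List.ofFn fun t => b (σ t) t).prod := by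
  rw [← Equiv.sum_comp (Equiv.inv (Equiv.Perm (Fin n)))
    (fun ρ => (Equiv.Perm.sign ρ : ℤ) • (List.ofFn fun t => b t (ρ t)).prod)]
  refine Finset.sum_congr rfl fun σ _ => ?_
  have h1 : Equiv.inv (Equiv.Perm (Fin n)) σ = σ⁻¹ := rfl
  rw [h1, Equiv.Perm.sign_inv]
  congr 1
  have hfun : (fun t => b t (σ⁻¹ t)) ∘ ⇑σ = fun t => b (σ t) t := by
    funext t
    simp
  have hperm : (List.ofFn ((fun t => b t (σ⁻¹ t)) ∘ ⇑σ)).Perm (List.ofFn fun t => b t (σ⁻¹ t)) :=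
    Equiv.Perm.ofFn_comp_perm σ _
  rw [hfun] at hperm
  refine (List.Perm.prod_eq' hperm ?_).symm
  rw [List.pairwise_ofFn]
  intro i j _
  exact hB _ _ _ _


theorem abs_capelli
    (hA : ∀ i k i' k', a i k * a i' k' = a i' k' * a i k)
    (hB : ∀ j k j' k', Commute (b j k) (b j' k'))
    (hAB : ∀ j k i l, b j k * a i l = a i l * b j k + (if i = j ∧ l = k then 1 else 0)) :
    (∑ σ : Equiv.Perm (Fin n), (Equiv.Perm.sign σ : ℤ) •
        (List.ofFn fun j : Fin n =>
          (∑ k, a (σ j) k * b j k)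
            + (if σ j = j then ((n : ℂ) - 1 - (j : ℕ)) • (1 : A) else 0)).prod)
      = (∑ σ : Equiv.Perm (Fin n), (Equiv.Perm.sign σ : ℤ) •
          (List.ofFn fun i : Fin n => a (σ i) i).prod)
        * (∑ σ : Equiv.Perm (Fin n), (Equiv.Perm.sign σ : ℤ) •
          (List.ofFn fun j : Fin n => b (σ j) j).prod) := by
  classical
  -- Step A : the column determinant is the top coefficient of the column product
  have stepA : Φ ((List.ofFn fun j : Fin n => colv (Mcolv a b j)).prod)
      = ∑ σ : Equiv.Perm (Fin n), (Equiv.Perm.sign σ : ℤ) •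
        (List.ofFn fun j : Fin n =>
          (∑ k, a (σ j) k * b j k)
            + (if σ j = j then ((n : ℂ) - 1 - (j : ℕ)) • (1 : A) else 0)).prod := by
    rw [expand n (Mcolv a b), map_sum,
      Finset.sum_congr rfl fun h _ => Φ_Ψ_ja h ((List.ofFn fun t => Mcolv a b t (h t)).prod),
      funsum _ (fun h hni => by rw [eps_zero hni, zero_smul])]
    refine Finset.sum_congr rfl fun σ _ => ?_
    rw [eps_perm, Int.cast_smul_eq_zsmul]
    rfl
  -- Step B : the column product equals `G`
  have stepB : (List.ofFn fun j : Fin n => colv (Mcolv a b j)).prod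
      = G a b n (fun t => t) := by
    rw [G_eq_prod a b n (fun t => t)]
    refine congrArg List.prod (congrArg List.ofFn (funext fun j => ?_))
    rw [colv_Mcolv]
    have hc : ((n - 1 - (j : ℕ) : ℕ) : ℂ) = (n : ℂ) - 1 - (j : ℕ) := by
      have hj := j.isLt
      rw [Nat.sub_sub, Nat.cast_sub (by omega)]
      push_cast
      ring
    rw [hc]
  -- the commutative subring generated by the `a`'s
  set S := Subring.closure (Set.range fun p : Fin n × Fin n => a p.1 p.2) with hSdef
  letI : CommRing S := Subring.closureCommRingOfComm
    (by rintro x ⟨p, rfl⟩ y ⟨q, rfl⟩; exact hA p.1 p.2 q.1 q.2)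
  set a' : Fin n → Fin n → S :=
    (fun i k => ⟨a i k, Subring.subset_closure ⟨(i, k), rfl⟩⟩) with ha'def
  have dtrans : ∀ g : Fin n → Fin n,
      S.subtype ((Matrix.of fun i t => a' i (g t)).det)
        = ∑ τ : Equiv.Perm (Fin n), (Equiv.Perm.sign τ : ℤ) •
            (List.ofFn fun t => a (τ t) (g t)).prod := by
    intro g
    rw [Matrix.det_apply, map_sum]
    refine Finset.sum_congr rfl fun τ _ => ?_
    rw [Units.smul_def, map_zsmul]
    congr 1
    rw [← List.prod_ofFn, map_list_prod, List.map_ofFn]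
    rfl
  -- Step C : the top coefficient of `G`
  have stepC : Φ (G a b n (fun t => t))
      = (∑ σ : Equiv.Perm (Fin n), (Equiv.Perm.sign σ : ℤ) •
          (List.ofFn fun i : Fin n => a (σ i) i).prod)
        * (∑ σ : Equiv.Perm (Fin n), (Equiv.Perm.sign σ : ℤ) •
          (List.ofFn fun j : Fin n => b (σ j) j).prod) := by
    rw [G_eq a b hA hAB n (fun t => t), map_sum]
    have hPl : ∀ g : Fin n → Fin n, Pl a (List.ofFn g)
        = ∑ h : Fin n → Fin n, (List.ofFn fun t => (ψ (h t) : TT n A)).prod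
            * ja ((List.ofFn fun t => a (h t) (g t)).prod) := by
      intro g
      have h0 : Pl a (List.ofFn g) = (List.ofFn fun t => colv (fun i => a i (g t))).prod := by
        rw [Pl, List.map_ofFn]
        rfl
      rw [h0, expand n (fun t => fun i => a i (g t))]
    have hterm : ∀ g : Fin n → Fin n,
        Φ (Pl a (List.ofFn g) * ja ((List.ofFn fun t => b ((fun s => s) t) (g t)).prod))
          = S.subtype ((Matrix.of fun i t => a' i (g t)).det)
              * (List.ofFn fun t => b t (g t)).prod := by
      intro g
      rw [hPl g, Finset.sum_mul, map_sum]
      have key : ∀ h : Fin n → Fin n,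
          Φ (((List.ofFn fun t => (ψ (h t) : TT n A)).prod
              * ja ((List.ofFn fun t => a (h t) (g t)).prod))
            * ja ((List.ofFn fun t => b ((fun s => s) t) (g t)).prod))
          = Matrix.detRowAlternating (fun t => (Pi.single (h t) 1 : Fin n → ℂ))
              • ((List.ofFn fun t => a (h t) (g t)).prod
                  * (List.ofFn fun t => b t (g t)).prod) := by
        intro h
        rw [mul_assoc, ← map_mul, Φ_Ψ_ja]
      rw [Finset.sum_congr rfl fun h _ => key h,
        funsum _ (fun h hni => by rw [eps_zero hni, zero_smul]),
        Finset.sum_congr rfl fun τ _ => by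
          rw [eps_perm, Int.cast_smul_eq_zsmul, ← smul_mul_assoc],
        ← Finset.sum_mul, ← dtrans g]
    rw [Finset.sum_congr rfl fun g _ => hterm g,
      funsum _ (fun g hni => by
        obtain ⟨t, t', hval, hne⟩ := Function.not_injective_iff.mp hni
        rw [Matrix.det_zero_of_column_eq hne (fun i => by
          show a' i (g t) = a' i (g t')
          rw [hval]), map_zero, zero_mul])]
    have hdp : ∀ ρ : Equiv.Perm (Fin n),
        S.subtype ((Matrix.of fun i t => a' i (ρ t)).det)
            * (List.ofFn fun t => b t (ρ t)).prod
          = (Equiv.Perm.sign ρ : ℤ) •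
              (S.subtype ((Matrix.of fun i t => a' i t).det)
                * (List.ofFn fun t => b t (ρ t)).prod) := by
      intro ρ
      have h1 : (Matrix.of fun i t => a' i (ρ t))
          = (Matrix.of fun i t => a' i t).submatrix id ⇑ρ := rfl
      rw [h1, Matrix.det_permute', map_mul, mul_assoc]
      rw [show (S.subtype ((Equiv.Perm.sign ρ : ℤˣ) : S) : A)
          = ((Equiv.Perm.sign ρ : ℤ) : A) from rfl,
        ← zsmul_eq_mul]
    rw [Finset.sum_congr rfl fun ρ _ => hdp ρ]
    have hfactor : ∑ ρ : Equiv.Perm (Fin n), (Equiv.Perm.sign ρ : ℤ) •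
          (S.subtype ((Matrix.of fun i t => a' i t).det)
            * (List.ofFn fun t => b t (ρ t)).prod)
        = S.subtype ((Matrix.of fun i t => a' i t).det)
            * ∑ ρ : Equiv.Perm (Fin n), (Equiv.Perm.sign ρ : ℤ) •
                (List.ofFn fun t => b t (ρ t)).prod := by
      rw [Finset.mul_sum]
      exact Finset.sum_congr rfl fun ρ _ => by rw [mul_smul_comm]
    rw [hfactor, breindex b hB, dtrans (fun t => t)]
  rw [← stepA, stepB, stepC]


section Instantiation

/-- the polynomial ring `ℂ[x_{ij}]`. -/
abbrev RR (n : ℕ) : Type := MvPolynomial (Fin n × Fin n) ℂ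

lemma pderiv_comm' {n : ℕ} (p q : Fin n × Fin n) (f : RR n) :
    pderiv p (pderiv q f) = pderiv q (pderiv p f) := by
  induction f using MvPolynomial.induction_on with
  | C a => simp
  | add f g hf hg => simp [hf, hg]
  | mul_X f s hf =>
    have h2 : ∀ r u : Fin n × Fin n, pderiv r (pderiv u (X s : RR n)) = 0 := by
      intro r u
      rcases eq_or_ne s u with h | h
      · subst h; simp
      · simp [pderiv_X_of_ne h]
    simp only [pderiv_mul, map_add, hf, h2, mul_zero, add_zero]
    ring

/-- multiplication operators. -/
def aE (n : ℕ) : Fin n → Fin n → Module.End ℂ (RR n) :=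
  fun i k => Algebra.lmul ℂ (RR n) (X (i, k))

/-- differentiation operators. -/
def bE (n : ℕ) : Fin n → Fin n → Module.End ℂ (RR n) :=
  fun j k => (pderiv ((j, k) : Fin n × Fin n)).toLinearMap

lemma aE_apply {n : ℕ} (i k : Fin n) (f : RR n) : aE n i k f = X (i, k) * f := rfl

lemma hA' {n : ℕ} : ∀ i k i' k' : Fin n, aE n i k * aE n i' k' = aE n i' k' * aE n i k := by
  intro i k i' k'
  refine LinearMap.ext fun f => ?_
  simp only [Module.End.mul_apply, aE_apply]
  ring

lemma hB' {n : ℕ} : ∀ j k j' k' : Fin n, Commute (bE n j k) (bE n j' k') := by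
  intro j k j' k'
  refine LinearMap.ext fun f => ?_
  simp only [Module.End.mul_apply, bE, Derivation.coeFn_coe]
  exact pderiv_comm' _ _ f

lemma hAB' {n : ℕ} : ∀ j k i l : Fin n,
    bE n j k * aE n i l = aE n i l * bE n j k + (if i = j ∧ l = k then 1 else 0) := by
  intro j k i l
  refine LinearMap.ext fun f => ?_
  simp only [Module.End.mul_apply, LinearMap.add_apply, aE_apply, bE, Derivation.coeFn_coe]
  rw [pderiv_mul]
  have hX : pderiv ((j, k) : Fin n × Fin n) (X (i, l) : RR n)
      = if i = j ∧ l = k then 1 else 0 := by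
    classical
    rw [pderiv_X]
    simp [Pi.single_apply, Prod.ext_iff, and_comm, eq_comm]
  rw [hX]
  by_cases h : i = j ∧ l = k
  · simp [h]
    ring
  · simp [h]

lemma derivation_sum_apply {n : ℕ} {ι : Type} (s : Finset ι)
    (D : ι → Derivation ℂ (RR n) (RR n)) (x : RR n) :
    (∑ i ∈ s, D i) x = ∑ i ∈ s, D i x := by
  have h1 := map_sum (Derivation.coeFnAddMonoidHom (R := ℂ) (A := RR n) (M := RR n)) D s
  calc (∑ i ∈ s, D i) x
      = (Derivation.coeFnAddMonoidHom (∑ i ∈ s, D i)) x := rfl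
    _ = (∑ i ∈ s, Derivation.coeFnAddMonoidHom (D i)) x := by rw [h1]
    _ = ∑ i ∈ s, D i x := by rw [Finset.sum_apply]; rfl

lemma Dpol_eq {n : ℕ} (i j : Fin n) :
    (Dpol n n i j).toLinearMap = ∑ k, aE n i k * bE n j k := by
  classical
  have hd : Dpol n n i j
      = ∑ k, (X ((i, k) : Fin n × Fin n) : RR n) • pderiv ((j, k) : Fin n × Fin n) := by
    apply MvPolynomial.derivation_ext
    intro p
    rw [Dpol, MvPolynomial.mkDerivation_X, derivation_sum_apply]
    have hterm : ∀ k : Fin n,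
        ((X ((i, k) : Fin n × Fin n) : RR n) • pderiv ((j, k) : Fin n × Fin n)) (X p)
          = (X ((i, k) : Fin n × Fin n) : RR n) * pderiv ((j, k) : Fin n × Fin n) (X p) := by
      intro k
      rw [Derivation.smul_apply, smul_eq_mul]
    rw [Finset.sum_congr rfl fun k _ => hterm k]
    obtain ⟨p1, p2⟩ := p
    rcases eq_or_ne p1 j with h | h
    · subst h
      rw [if_pos rfl]
      rw [Finset.sum_congr rfl fun k _ => by rw [pderiv_X]]
      simp [Pi.single_apply, Prod.ext_iff, mul_ite, Finset.sum_ite_eq', eq_comm]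
    · rw [if_neg h]
      rw [Finset.sum_congr rfl fun k _ => by
        rw [pderiv_X_of_ne (show ((p1, p2) : Fin n × Fin n) ≠ (j, k) from by
          simp [Prod.ext_iff, h]), mul_zero]]
      simp
  rw [hd]
  refine LinearMap.ext fun f => ?_
  rw [show ((∑ k, (X ((i, k) : Fin n × Fin n) : RR n)
        • pderiv ((j, k) : Fin n × Fin n)).toLinearMap f : RR n)
      = (∑ k, (X ((i, k) : Fin n × Fin n) : RR n) • pderiv ((j, k) : Fin n × Fin n)) f from rfl,
    derivation_sum_apply, LinearMap.sum_apply]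
  refine Finset.sum_congr rfl fun k _ => ?_
  rw [Derivation.smul_apply, smul_eq_mul]
  rfl

lemma det_factor {n : ℕ} :
    (∑ σ : Equiv.Perm (Fin n), (Equiv.Perm.sign σ : ℤ) •
        (List.ofFn fun i : Fin n => aE n (σ i) i).prod)
      = Algebra.lmul ℂ (RR n)
          (Matrix.det (Matrix.of fun i j : Fin n => (X (i, j) : RR n))) := by
  rw [Matrix.det_apply, map_sum]
  refine Finset.sum_congr rfl fun σ _ => ?_
  rw [Units.smul_def, map_zsmul]
  congr 1
  rw [← List.prod_ofFn, map_list_prod, List.map_ofFn]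
  rfl

end Instantiation

end CapelliAux

/-- **The classical Capelli identity (case `n = d`)**: the operator column determinant
`Σ_σ sgn(σ) (D_{σ(1),1} + δ_{σ(1),1}(n−1)) ∘ ⋯ ∘ (D_{σ(n),n} + δ_{σ(n),n}·0)` applied to a
polynomial `f` equals `det[x_{ij}] · Ω_n(f)`. -/
theorem capelli_identity_square (n : ℕ) (f : MvPolynomial (Fin n × Fin n) ℂ) :
    (∑ σ : Equiv.Perm (Fin n), (Equiv.Perm.sign σ : ℤ) •
      (List.ofFn fun j : Fin n =>
        ((Dpol n n (σ j) j).toLinearMap : Module.End ℂ (MvPolynomial (Fin n × Fin n) ℂ)) +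
          (if σ j = j then ((n : ℂ) - 1 - (j : ℕ)) else 0) • 1).prod) f
    = Matrix.det (Matrix.of fun i j : Fin n => MvPolynomial.X (i, j)) * cayleyOmega n f := by
  have habs := CapelliAux.abs_capelli (CapelliAux.aE n) (CapelliAux.bE n)
    CapelliAux.hA' CapelliAux.hB' CapelliAux.hAB'
  have hL : (∑ σ : Equiv.Perm (Fin n), (Equiv.Perm.sign σ : ℤ) •
      (List.ofFn fun j : Fin n =>
        ((Dpol n n (σ j) j).toLinearMap : Module.End ℂ (MvPolynomial (Fin n × Fin n) ℂ)) +
          (if σ j = j then ((n : ℂ) - 1 - (j : ℕ)) else 0) • 1).prod)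
      = ∑ σ : Equiv.Perm (Fin n), (Equiv.Perm.sign σ : ℤ) •
        (List.ofFn fun j : Fin n =>
          (∑ k, CapelliAux.aE n (σ j) k * CapelliAux.bE n j k)
            + (if σ j = j then ((n : ℂ) - 1 - (j : ℕ)) • (1 : Module.End ℂ (CapelliAux.RR n))
                else 0)).prod := by
    refine Finset.sum_congr rfl fun σ _ => ?_
    congr 1
    refine congrArg List.prod (congrArg List.ofFn (funext fun j => ?_))
    rw [CapelliAux.Dpol_eq, ite_smul, zero_smul]
  rw [hL, habs, CapelliAux.det_factor, Module.End.mul_apply]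
  rfl
end
end

section
/- For p = 0, 1, …, n−1, the polynomials g_p(x_1, …, x_n) = (x_1 − p + n − 1)(x_2 − p + n − 2)⋯(x_n − p) ∈ ℂ[x_1, …, x_n] are shifted symmetric, are algebraically independent over ℂ, and generate the algebra Λ*(n) of shifted symmetric polynomials: Λ*(n) = ℂ[g_0, g_1, …, g_{n−1}]. -/
/-!
Translating the variables by `ρ = (n - 1, …, 1, 0)` turns the shifted action of an adjacent
transposition into the plain one, so shifted symmetric polynomials are exactly the translates of
symmetric polynomials, and `g_p` is the translate of `∏ᵢ (xᵢ - p)`. By Vieta,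
`∏ᵢ (xᵢ - a) = ∑ₖ (-a)ᵏ e_{n-k} + (-a)ⁿ`, so for distinct `a_0, …, a_{n-1}` the polynomials
`∏ᵢ (xᵢ - a_p)` arise from `e_1, …, e_n` by an affine substitution whose linear part is an
invertible Vandermonde matrix. Such a substitution is an automorphism of the polynomial ring,
so they inherit from the elementary symmetric polynomials both algebraic independence and the
property of generating the symmetric polynomials.
-/

noncomputable section

open MvPolynomial

/-- A polynomial `f ∈ ℂ[x_1, …, x_n]` is *shifted symmetric* if
`f(x_1, …, x_i, x_{i+1}, …, x_n) = f(x_1, …, x_{i+1} − 1, x_i + 1, …, x_n)` for every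
`i = 1, …, n−1`. -/
def ShiftedSymmetric {n : ℕ} (f : MvPolynomial (Fin n) ℂ) : Prop :=
  ∀ i j : Fin n, (i : ℕ) + 1 = (j : ℕ) →
    MvPolynomial.aeval (fun k : Fin n =>
      if k = i then MvPolynomial.X j - 1
      else if k = j then MvPolynomial.X i + 1
      else MvPolynomial.X k) f = f

/-- `g_p(x_1, …, x_n) = (x_1 − p + n − 1)(x_2 − p + n − 2)⋯(x_n − p)`. -/
def gPoly (n : ℕ) (p : ℕ) : MvPolynomial (Fin n) ℂ :=
  ∏ i : Fin n, (MvPolynomial.X i + MvPolynomial.C ((n : ℂ) - 1 - (i : ℕ) - (p : ℕ)))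

open Matrix

namespace MvPolynomial

section AffineSubst

variable {ι R S : Type*} [Fintype ι] [CommRing R] [CommRing S] [Algebra R S]

def affineSubst (A : Matrix ι ι R) (b : ι → R) : MvPolynomial ι R →ₐ[R] MvPolynomial ι R :=
  aeval (A.map C *ᵥ X + C ∘ b)

theorem aeval_comp_affineSubst (y : ι → S) (A : Matrix ι ι R) (b : ι → R) :
    (aeval y).comp (affineSubst A b) =
      aeval (A.map (algebraMap R S) *ᵥ y + algebraMap R S ∘ b) := by
  refine algHom_ext fun p => ?_
  simp [affineSubst, mulVec, dotProduct, map_sum]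

theorem affineSubst_comp_affineSubst (A B : Matrix ι ι R) (b c : ι → R) :
    (affineSubst A b).comp (affineSubst B c) = affineSubst (B * A) (B *ᵥ b + c) := by
  have hb : B.map C *ᵥ (C ∘ b) = (C : R →+* MvPolynomial ι R) ∘ (B *ᵥ b) := by
    funext p; exact (RingHom.map_mulVec C B b p).symm
  rw [affineSubst, aeval_comp_affineSubst, affineSubst, algebraMap_eq, mulVec_add, mulVec_mulVec,
    ← Matrix.map_mul, hb, add_assoc, map_comp_add]

variable [DecidableEq ι]

theorem affineSubst_one_zero : affineSubst (1 : Matrix ι ι R) 0 = AlgHom.id R _ := by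
  rw [affineSubst, Matrix.map_one _ (map_zero C) (map_one C), one_mulVec, map_comp_zero, add_zero,
    aeval_X_left]

def affineSubstEquiv (A : Matrix ι ι R) (hA : IsUnit A.det) (b : ι → R) :
    MvPolynomial ι R ≃ₐ[R] MvPolynomial ι R :=
  AlgEquiv.ofAlgHom (affineSubst A b) (affineSubst A⁻¹ (-(A⁻¹ *ᵥ b)))
    (by rw [affineSubst_comp_affineSubst, nonsing_inv_mul A hA, add_neg_cancel,
      affineSubst_one_zero])
    (by rw [affineSubst_comp_affineSubst, mul_nonsing_inv A hA, mulVec_neg, mulVec_mulVec,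
      mul_nonsing_inv A hA, one_mulVec, neg_add_cancel, affineSubst_one_zero])

theorem algebraicIndependent_mulVec_add_iff {y : ι → S} {A : Matrix ι ι R} (hA : IsUnit A.det)
    (b : ι → R) :
    AlgebraicIndependent R (A.map (algebraMap R S) *ᵥ y + algebraMap R S ∘ b) ↔
      AlgebraicIndependent R y := by
  rw [algebraicIndependent_iff_injective_aeval, algebraicIndependent_iff_injective_aeval,
    ← aeval_comp_affineSubst, AlgHom.coe_comp]
  exact Function.Injective.of_comp_iff' _ (affineSubstEquiv A hA b).bijective

theorem adjoin_range_mulVec_add (y : ι → S) {A : Matrix ι ι R} (hA : IsUnit A.det) (b : ι → R) :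
    Algebra.adjoin R (Set.range (A.map (algebraMap R S) *ᵥ y + algebraMap R S ∘ b)) =
      Algebra.adjoin R (Set.range y) := by
  rw [Algebra.adjoin_range_eq_range_aeval, Algebra.adjoin_range_eq_range_aeval,
    ← aeval_comp_affineSubst, AlgHom.range_comp,
    (AlgHom.range_eq_top _).2 (affineSubstEquiv A hA b).surjective, Algebra.map_top]

end AffineSubst

theorem isSymmetric_iff_forall_rename_swap_adjacent {R : Type*} [CommSemiring R] {n : ℕ}
    {φ : MvPolynomial (Fin n) R} :
    φ.IsSymmetric ↔ ∀ i j : Fin n, (i : ℕ) + 1 = j → rename (Equiv.swap i j) φ = φ := by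
  refine ⟨fun h i j _ => h _, fun h σ => ?_⟩
  rcases n with _ | m
  · rw [Subsingleton.elim σ 1, Equiv.Perm.coe_one, rename_id, AlgHom.id_apply]
  have hσ : σ ∈ Submonoid.closure (Set.range fun i : Fin m => Equiv.swap i.castSucc i.succ) := by
    rw [Equiv.Perm.mclosure_swap_castSucc_succ]; trivial
  induction hσ using Submonoid.closure_induction with
  | mem _ hτ => obtain ⟨i, rfl⟩ := hτ; exact h _ _ (by simp)
  | one => rw [Equiv.Perm.coe_one, rename_id, AlgHom.id_apply]
  | mul τ τ' _ _ hτ hτ' => rw [Equiv.Perm.coe_mul, ← rename_rename, hτ', hτ]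

section CommRing

variable (R : Type*) [CommRing R] (n : ℕ)

theorem algebraicIndependent_esymm :
    AlgebraicIndependent R fun i : Fin n => esymm (Fin n) R (i + 1) := by
  rw [algebraicIndependent_iff_injective_aeval]
  have : ⇑(aeval fun i : Fin n => esymm (Fin n) R (i + 1)) =
      Subtype.val ∘ esymmAlgHom (Fin n) R n := by
    funext φ; exact (esymmAlgHom_apply φ).symm
  rw [this]
  exact Subtype.val_injective.comp (esymmAlgHom_fin_bijective R n).1

theorem adjoin_esymm_eq_symmetricSubalgebra :
    Algebra.adjoin R (Set.range fun i : Fin n => esymm (Fin n) R (i + 1)) =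
      symmetricSubalgebra (Fin n) R := by
  ext φ
  rw [Algebra.adjoin_range_eq_range_aeval, AlgHom.mem_range]
  constructor
  · rintro ⟨ψ, rfl⟩
    rw [← esymmAlgHom_apply]
    exact (esymmAlgHom (Fin n) R n ψ).2
  · intro hφ
    obtain ⟨ψ, hψ⟩ := (esymmAlgHom_fin_bijective R n).2 ⟨φ, hφ⟩
    exact ⟨ψ, by rw [← esymmAlgHom_apply, hψ]⟩

theorem prod_X_sub_C_eq_vandermonde_mulVec_esymm (a : Fin n → R) :
    (fun p => ∏ i, (X i - C (a p))) =
      (vandermonde (-a)).map (algebraMap R (MvPolynomial (Fin n) R)) *ᵥ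
          (fun k : Fin n => esymm (Fin n) R (n - k)) +
        algebraMap R (MvPolynomial (Fin n) R) ∘ fun p => (-a p) ^ n := by
  funext p
  have vieta := congrArg (Polynomial.eval (-C (a p))) (prod_C_add_X_eq_sum_esymm R (Fin n))
  simp only [Polynomial.eval_prod, Polynomial.eval_add, Polynomial.eval_X, Polynomial.eval_C,
    Polynomial.eval_finsetSum, Polynomial.eval_mul, Polynomial.eval_pow, Fintype.card_fin] at vieta
  calc ∏ i, (X i - C (a p))
      = ∑ j ∈ Finset.range (n + 1), esymm (Fin n) R j * (-C (a p)) ^ (n - j) := by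
        simp_rw [← vieta, neg_add_eq_sub]
    _ = ∑ k ∈ Finset.range (n + 1), esymm (Fin n) R (n - k) * (-C (a p)) ^ k := by
        rw [← Finset.sum_range_reflect]
        refine Finset.sum_congr rfl fun k hk => ?_
        rw [Finset.mem_range] at hk
        rw [show n + 1 - 1 - k = n - k by omega, show n - (n - k) = k by omega]
    _ = _ := by
        rw [Finset.sum_range_succ,
          ← Fin.sum_univ_eq_sum_range fun k => esymm (Fin n) R (n - k) * (-C (a p)) ^ k]
        simp [mulVec, dotProduct, mul_comm]

theorem esymm_sub_eq_esymm_rev (k : Fin n) :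
    esymm (Fin n) R (n - k : ℕ) = esymm (Fin n) R (k.rev + 1) := by
  rw [Fin.val_rev]; congr 1; omega

end CommRing

section Field

variable {K : Type*} [Field K] {n : ℕ}

theorem isUnit_det_vandermonde {v : Fin n → K} (hv : Function.Injective v) :
    IsUnit (vandermonde v).det :=
  isUnit_iff_ne_zero.2 (det_vandermonde_ne_zero_iff.2 hv)

variable {a : Fin n → K}

theorem algebraicIndependent_prod_X_sub_C (ha : Function.Injective a) :
    AlgebraicIndependent K fun p => ∏ i, (X i - C (a p) : MvPolynomial (Fin n) K) := by
  rw [prod_X_sub_C_eq_vandermonde_mulVec_esymm, algebraicIndependent_mulVec_add_iff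
    (isUnit_det_vandermonde (v := -a) (neg_injective.comp ha))]
  simp_rw [esymm_sub_eq_esymm_rev]
  exact (algebraicIndependent_esymm K n).comp _ Fin.rev_injective

theorem adjoin_prod_X_sub_C_eq_symmetricSubalgebra (ha : Function.Injective a) :
    Algebra.adjoin K (Set.range fun p => ∏ i, (X i - C (a p))) =
      symmetricSubalgebra (Fin n) K := by
  rw [prod_X_sub_C_eq_vandermonde_mulVec_esymm,
    adjoin_range_mulVec_add _ (isUnit_det_vandermonde (v := -a) (neg_injective.comp ha))]
  simp_rw [esymm_sub_eq_esymm_rev]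
  rw [← adjoin_esymm_eq_symmetricSubalgebra]
  exact congrArg _ (Fin.rev_surjective.range_comp fun i : Fin n => esymm (Fin n) K (i + 1))

end Field

end MvPolynomial

def rhoShift (n : ℕ) : MvPolynomial (Fin n) ℂ ≃ₐ[ℂ] MvPolynomial (Fin n) ℂ :=
  affineSubstEquiv 1 (by rw [Matrix.det_one]; exact isUnit_one) fun i => (n : ℂ) - 1 - (i : ℕ)

theorem rhoShift_X (n : ℕ) (k : Fin n) : rhoShift n (X k) = X k + C ((n : ℂ) - 1 - (k : ℕ)) := by
  change aeval _ (X k) = _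
  rw [aeval_X, Matrix.map_one _ (map_zero C) (map_one C), one_mulVec]
  rfl

theorem gPoly_eq_rhoShift (n p : ℕ) : gPoly n p = rhoShift n (∏ i, (X i - C (p : ℂ))) := by
  simp only [gPoly, map_prod, map_sub, rhoShift_X, ← algebraMap_eq, AlgEquiv.commutes]
  simp only [algebraMap_eq, add_sub_assoc, ← C_sub]

theorem aeval_rhoShift_of_adjacent {n : ℕ} {i j : Fin n} (hij : (i : ℕ) + 1 = j)
    (φ : MvPolynomial (Fin n) ℂ) :
    aeval (fun k => if k = i then X j - 1 else if k = j then X i + 1 else X k) (rhoShift n φ) =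
      rhoShift n (rename (Equiv.swap i j) φ) := by
  have hc : (n : ℂ) - 1 - (i : ℕ) = (n : ℂ) - 1 - (j : ℕ) + 1 := by
    rw [← hij]; push_cast; ring
  suffices h : (aeval fun k => if k = i then X j - 1 else if k = j then X i + 1 else X k).comp
      (rhoShift n).toAlgHom = (rhoShift n).toAlgHom.comp (rename (Equiv.swap i j)) from
    DFunLike.congr_fun h φ
  refine algHom_ext fun k => ?_
  simp only [AlgHom.comp_apply, AlgEquiv.coe_toAlgHom, rhoShift_X, rename_X, map_add, aeval_X,
    aeval_C, algebraMap_eq]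
  by_cases hki : k = i
  · rw [hki, if_pos rfl, Equiv.swap_apply_left, hc, C_add, C_1]
    ring
  by_cases hkj : k = j
  · rw [hkj, if_neg (hkj ▸ hki), if_pos rfl, Equiv.swap_apply_right, hc, C_add, C_1]
    ring
  · rw [if_neg hki, if_neg hkj, Equiv.swap_apply_of_ne_of_ne hki hkj]

theorem shiftedSymmetric_iff_isSymmetric_rhoShift_symm {n : ℕ} (f : MvPolynomial (Fin n) ℂ) :
    ShiftedSymmetric f ↔ ((rhoShift n).symm f).IsSymmetric := by
  obtain ⟨φ, rfl⟩ := (rhoShift n).surjective f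
  rw [AlgEquiv.symm_apply_apply, isSymmetric_iff_forall_rename_swap_adjacent]
  refine forall₂_congr fun i j => forall_congr' fun hij => ?_
  rw [aeval_rhoShift_of_adjacent hij, (rhoShift n).injective.eq_iff]

/-- For `p = 0, 1, …, n−1` the polynomials
`g_p = (x_1 − p + n − 1)(x_2 − p + n − 2)⋯(x_n − p)` are shifted symmetric, algebraically
independent over `ℂ`, and generate the algebra `Λ*(n)` of shifted symmetric polynomials:
`Λ*(n) = ℂ[g_0, g_1, …, g_{n−1}]`. -/
theorem shiftedSymmetric_eq_polynomial_algebra_g (n : ℕ) :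
    (∀ p : Fin n, ShiftedSymmetric (gPoly n (p : ℕ))) ∧
    AlgebraicIndependent ℂ (fun p : Fin n => gPoly n (p : ℕ)) ∧
    (∀ f : MvPolynomial (Fin n) ℂ,
      ShiftedSymmetric f ↔
        f ∈ Algebra.adjoin ℂ (Set.range fun p : Fin n => gPoly n (p : ℕ))) := by
  have hg : (fun p : Fin n => gPoly n p) =
      rhoShift n ∘ fun p : Fin n => ∏ i, (X i - C ((p : ℕ) : ℂ)) :=
    funext fun p => gPoly_eq_rhoShift n p
  have ha : Function.Injective fun p : Fin n => ((p : ℕ) : ℂ) :=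
    Nat.cast_injective.comp Fin.val_injective
  have hadjoin (f : MvPolynomial (Fin n) ℂ) :
      f ∈ Algebra.adjoin ℂ (Set.range fun p : Fin n => gPoly n p) ↔ ShiftedSymmetric f := by
    rw [hg, Set.range_comp, ← AlgEquiv.coe_toAlgHom, Algebra.adjoin_image,
      adjoin_prod_X_sub_C_eq_symmetricSubalgebra ha,
      shiftedSymmetric_iff_isSymmetric_rhoShift_symm, ← mem_symmetricSubalgebra, Subalgebra.mem_map]
    exact ⟨fun ⟨φ, hφ, hf⟩ => hf ▸ by simpa using hφ, fun h => ⟨_, h, by simp⟩⟩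
  refine ⟨fun p => (hadjoin _).1 (Algebra.subset_adjoin ⟨p, rfl⟩), ?_, fun f => (hadjoin f).symm⟩
  rw [hg]
  exact (algebraicIndependent_prod_X_sub_C ha).map' (rhoShift n).injective
end
end

section
/- In the polynomial ring ℂ[x_1, …, x_n][t] the identity (x_1 − t + n − 1)(x_2 − t + n − 2)⋯(x_n − t) = Σ_{j=0}^{n} (−1)^{n−j} e_j^*(x_1, …, x_n) (t)_{n−j} holds, where e_j^* is the j-th shifted elementary symmetric polynomial and (t)_k = t(t−1)⋯(t−k+1) is the k-th falling factorial polynomial. -/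
noncomputable section

open MvPolynomial

/-- The `k`-th shifted elementary symmetric polynomial
`e_k^*(x_1, …, x_n) = Σ_{1 ≤ i_1 < ⋯ < i_k ≤ n} (x_{i_1} + k − 1)(x_{i_2} + k − 2)⋯(x_{i_k})`,
with `e_0^* = 1`. -/
def shiftedElemSym (n k : ℕ) : MvPolynomial (Fin n) ℂ :=
  ∑ f ∈ Finset.univ.filter (fun f : Fin k → Fin n => ∀ a b : Fin k, a < b → f a < f b),
    ∏ a : Fin k, (MvPolynomial.X (f a) + MvPolynomial.C ((k : ℂ) - 1 - (a : ℕ)))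

/-- The `k`-th falling factorial polynomial `(t)_k = t(t−1)⋯(t−k+1)`. -/
def fallingFactorialPoly (R : Type*) [CommRing R] (k : ℕ) : Polynomial R :=
  ∏ l ∈ Finset.range k, (Polynomial.X - Polynomial.C (l : R))

/-!
Induct on `n`, splitting off the first variable `y₀`. A strictly increasing tuple of indices
either starts at `0` or avoids it, whence `e*_{k+1}(y) = (y₀ + k) e*_k(y') + e*_{k+1}(y')` for the
remaining variables `y'`. On the product side, the new factor `y₀ + n - t` multiplies `(t)_m`,
for `j + m = n`, into `(y₀ + j) (t)_m - (t)_{m+1}` because `(t)_{m+1} = (t)_m (t - m)`. After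
substituting the induction hypothesis, the two recursions match term by term.
-/

open Finset
open scoped Polynomial

variable {k m n : ℕ}

theorem Fin.natCast_val_rev {R : Type*} [Ring R] (a : Fin k) : ((a.rev : ℕ) : R) = k - 1 - a := by
  rw [Fin.val_rev, Nat.cast_sub (by omega), Nat.cast_add, Nat.cast_one]
  abel

theorem Fin.exists_strictMono_succ_comp_eq_iff {f : Fin m → Fin (n + 1)} :
    (∃ g : Fin m → Fin n, StrictMono g ∧ Fin.succ ∘ g = f) ↔ StrictMono f ∧ ∀ a, f a ≠ 0 := by
  constructor
  · rintro ⟨g, hg, rfl⟩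
    exact ⟨Fin.strictMono_succ.comp hg, fun a => Fin.succ_ne_zero _⟩
  · rintro ⟨hf, hf0⟩
    choose g hg using fun a => Fin.exists_succ_eq.2 (hf0 a)
    obtain rfl : Fin.succ ∘ g = f := funext hg
    exact ⟨g, fun a b hab => Fin.succ_lt_succ_iff.1 (hf hab), rfl⟩

theorem Fin.sum_filter_strictMono_succ {M : Type*} [AddCommMonoid M]
    (φ : (Fin (k + 1) → Fin (n + 1)) → M) :
    ∑ f ∈ univ.filter StrictMono, φ f =
      ∑ g ∈ univ.filter (StrictMono : (Fin k → Fin n) → Prop), φ (Fin.cons 0 (Fin.succ ∘ g)) +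
        ∑ g ∈ univ.filter (StrictMono : (Fin (k + 1) → Fin n) → Prop), φ (Fin.succ ∘ g) := by
  have h_zero : (univ.filter StrictMono).image
      (fun g : Fin k → Fin n => (Fin.cons 0 (Fin.succ ∘ g) : Fin (k + 1) → Fin (n + 1))) =
      (univ.filter StrictMono).filter (· 0 = 0) := by
    ext f
    simp only [mem_image, mem_filter, mem_univ, true_and]
    constructor
    · rintro ⟨g, hg, rfl⟩
      exact ⟨Fin.strictMono_cons.2 ⟨fun _ => Fin.succ_pos _, Fin.strictMono_succ.comp hg⟩, rfl⟩
    · rintro ⟨hf, hf0⟩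
      obtain ⟨g, hg, hgf⟩ := Fin.exists_strictMono_succ_comp_eq_iff.2
        ⟨hf.comp Fin.strictMono_succ, fun a => (hf0 ▸ hf (Fin.succ_pos a)).ne'⟩
      exact ⟨g, hg, by rw [hgf, ← hf0]; exact Fin.cons_self_tail f⟩
  have h_ne_zero : (univ.filter StrictMono).image
      (fun g : Fin (k + 1) → Fin n => Fin.succ ∘ g) =
      (univ.filter StrictMono).filter (· 0 ≠ 0) := by
    ext f
    simp only [mem_image, mem_filter, mem_univ, true_and, Fin.exists_strictMono_succ_comp_eq_iff]
    refine and_congr_right fun hf => ⟨fun h => h 0, fun h a => ?_⟩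
    exact ((Fin.pos_iff_ne_zero.2 h).trans_le (hf.monotone (Fin.zero_le a))).ne'
  rw [← sum_filter_add_sum_filter_not _ (· 0 = 0), ← h_zero, ← h_ne_zero, sum_image, sum_image]
  · exact ((Fin.succ_injective _).comp_left).injOn
  · exact ((Fin.cons_right_injective (α := fun _ => Fin (n + 1)) 0).comp
      (Fin.succ_injective _).comp_left).injOn

section ShiftedEsymm

variable {R : Type*} [CommRing R]

/-- Since `a.rev = k - 1 - a`, the factors carry the shifts `k - 1, k - 2, …, 0`. -/
def shiftedEsymm (y : Fin n → R) (k : ℕ) : R :=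
  ∑ f ∈ univ.filter (StrictMono : (Fin k → Fin n) → Prop), ∏ a : Fin k, (y (f a) + (a.rev : ℕ))

@[simp]
theorem shiftedEsymm_zero (y : Fin n → R) : shiftedEsymm y 0 = 1 := by
  simp [shiftedEsymm, filter_true_of_mem fun f _ => Subsingleton.strictMono f]

theorem shiftedEsymm_eq_zero_of_lt (y : Fin n → R) (h : n < k) : shiftedEsymm y k = 0 := by
  refine sum_eq_zero fun f hf => absurd h (not_lt.2 ?_)
  simpa using Fintype.card_le_of_injective f (mem_filter.1 hf).2.injective

theorem shiftedEsymm_succ (y : Fin (n + 1) → R) (k : ℕ) :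
    shiftedEsymm y (k + 1) =
      (y 0 + k) * shiftedEsymm (y ∘ Fin.succ) k + shiftedEsymm (y ∘ Fin.succ) (k + 1) := by
  rw [shiftedEsymm, Fin.sum_filter_strictMono_succ, shiftedEsymm, shiftedEsymm, mul_sum]
  congr 1
  refine sum_congr rfl fun g _ => ?_
  simp [Fin.prod_univ_succ]

namespace Polynomial

theorem C_sub_X_add_natCast_mul_descPochhammer (r : R) (j m : ℕ) :
    (C r - X + ((j + m : ℕ) : R[X])) * descPochhammer R m =
      C (r + j) * descPochhammer R m - descPochhammer R (m + 1) := by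
  rw [descPochhammer_succ_right, map_add, map_natCast, Nat.cast_add]
  ring

theorem prod_C_sub_X_add_rev_eq_sum_shiftedEsymm (y : Fin n → R) :
    ∏ i : Fin n, (C (y i) - X + ((i.rev : ℕ) : R[X])) =
      ∑ p ∈ antidiagonal n, (-1) ^ p.2 * C (shiftedEsymm y p.1) * descPochhammer R p.2 := by
  induction n with
  | zero => simp
  | succ n ih =>
    -- both sides of the inductive step reduce to this expansion of `y ∘ Fin.succ` in degree `n + 1`
    set S := ∑ p ∈ antidiagonal (n + 1),
      (-1) ^ p.2 * C (shiftedEsymm (y ∘ Fin.succ) p.1) * descPochhammer R p.2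
    have hS_succ : S = (-1) ^ (n + 1) * descPochhammer R (n + 1) + ∑ p ∈ antidiagonal n,
        (-1) ^ p.2 * C (shiftedEsymm (y ∘ Fin.succ) (p.1 + 1)) * descPochhammer R p.2 := by
      simp [S, Nat.sum_antidiagonal_succ]
    have hS_succ' : S = -∑ p ∈ antidiagonal n,
        (-1) ^ p.2 * C (shiftedEsymm (y ∘ Fin.succ) p.1) * descPochhammer R (p.2 + 1) := by
      simp [S, Nat.sum_antidiagonal_succ', shiftedEsymm_eq_zero_of_lt, pow_succ]
    calc ∏ i : Fin (n + 1), (C (y i) - X + ((i.rev : ℕ) : R[X]))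
        = (C (y 0) - X + (n : R[X])) *
            ∏ i : Fin n, (C ((y ∘ Fin.succ) i) - X + ((i.rev : ℕ) : R[X])) := by
          simp [Fin.prod_univ_succ]
      _ = ∑ p ∈ antidiagonal n,
            (-1) ^ p.2 * C ((y 0 + p.1) * shiftedEsymm (y ∘ Fin.succ) p.1) * descPochhammer R p.2
            + S := by
          rw [ih, hS_succ', mul_sum, ← sub_eq_add_neg, ← sum_sub_distrib]
          refine sum_congr rfl fun p hp => ?_
          have hfactor := C_sub_X_add_natCast_mul_descPochhammer (y 0) p.1 p.2
          rw [mem_antidiagonal.1 hp] at hfactor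
          rw [map_mul]
          linear_combination (-1) ^ p.2 * C (shiftedEsymm (y ∘ Fin.succ) p.1) * hfactor
      _ = ∑ p ∈ antidiagonal (n + 1), (-1) ^ p.2 * C (shiftedEsymm y p.1) * descPochhammer R p.2 := by
          rw [hS_succ, Nat.sum_antidiagonal_succ]
          simp only [shiftedEsymm_succ, shiftedEsymm_zero, map_add, map_one, mul_add, add_mul,
            sum_add_distrib]
          ring

end Polynomial

end ShiftedEsymm

theorem fallingFactorialPoly_eq_descPochhammer (R : Type*) [CommRing R] (k : ℕ) :
    fallingFactorialPoly R k = descPochhammer R k := by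
  induction k with
  | zero => simp [fallingFactorialPoly]
  | succ k ih => rw [fallingFactorialPoly, prod_range_succ, ← fallingFactorialPoly, ih,
      descPochhammer_succ_right, map_natCast]

theorem shiftedElemSym_eq_shiftedEsymm :
    shiftedElemSym n k = shiftedEsymm (X : Fin n → MvPolynomial (Fin n) ℂ) k :=
  sum_congr rfl fun _ _ => prod_congr rfl fun a _ => by rw [Fin.natCast_val_rev]; simp

/-- In `ℂ[x_1, …, x_n][t]` the identity
`(x_1 − t + n − 1)(x_2 − t + n − 2)⋯(x_n − t) = Σ_{j=0}^{n} (−1)^{n−j} e_j^* (t)_{n−j}`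
holds. -/
theorem shifted_product_eq_sum_shiftedElemSym (n : ℕ) :
    ∏ i : Fin n,
      (Polynomial.C (MvPolynomial.X i) - Polynomial.X +
        Polynomial.C (MvPolynomial.C ((n : ℂ) - 1 - (i : ℕ)))) =
    ∑ j ∈ Finset.range (n + 1),
      (-1 : Polynomial (MvPolynomial (Fin n) ℂ)) ^ (n - j) *
        Polynomial.C (shiftedElemSym n j) *
        fallingFactorialPoly (MvPolynomial (Fin n) ℂ) (n - j) := by
  have hshift (i : Fin n) : Polynomial.C (MvPolynomial.C ((n : ℂ) - 1 - (i : ℕ))) =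
      ((i.rev : ℕ) : Polynomial (MvPolynomial (Fin n) ℂ)) := by
    rw [Fin.natCast_val_rev]; simp
  simp only [hshift, Polynomial.prod_C_sub_X_add_rev_eq_sum_shiftedEsymm,
    Nat.sum_antidiagonal_eq_sum_range_succ_mk, shiftedElemSym_eq_shiftedEsymm,
    fallingFactorialPoly_eq_descPochhammer]
end
end
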